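/- arXiv:2510.27098 — 2 statements merged into one kernel-verified Lean document; each statement's English description precedes it below -/
import Mathlib

section
/- Under assumptions (A1)--(A3), if the limit $q_f=\lim_{u\to\infty} f'(u)^2/(f(u)f''(u))$ exists, then $q_f\geq 1$. -/
/-!
With `h = f / f'` one has `h' = 1 - 1 / g`, where `g = f'² / (f f'')` is the quotient whose
limit is `q`. As `g > 0`, if `q < 1` then eventually `g < c` for some `0 < c < 1`, so
`h' ≤ 1 - 1 / c < 0` and `h → -∞`. But `f'` is increasing and positive, so `f → ∞` and `h` is
eventually positive.
-/

open Real Filter Set Topology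

lemma tendsto_atTop_of_eventually_le_deriv {f f' : ℝ → ℝ} {δ : ℝ} (hδ : 0 < δ)
    (hf : ∀ᶠ x in atTop, HasDerivAt f (f' x) x) (hle : ∀ᶠ x in atTop, δ ≤ f' x) :
    Tendsto f atTop atTop := by
  obtain ⟨a, ha⟩ := eventually_atTop.1 (hf.and hle)
  have hdiff : ∀ x ∈ Ici a, DifferentiableAt ℝ f x := fun x hx => (ha x hx).1.differentiableAt
  have hlin : ∀ x ≥ a, δ * (x - a) ≤ f x - f a := fun x hx =>
    (convex_Ici a).mul_sub_le_image_sub_of_le_deriv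
      (fun x hx => (hdiff x hx).continuousAt.continuousWithinAt)
      (fun x hx => (hdiff x (interior_subset hx)).differentiableWithinAt)
      (fun x hx => (ha x (interior_subset hx)).1.deriv ▸ (ha x (interior_subset hx)).2)
      a self_mem_Ici x hx hx
  have hline : Tendsto (fun x => f a + δ * (x - a)) atTop atTop :=
    tendsto_atTop_add_const_left _ _
      ((tendsto_atTop_add_const_right _ _ tendsto_id).const_mul_atTop hδ)
  refine tendsto_atTop_mono' atTop (eventually_atTop.2 ⟨a, fun x hx => ?_⟩) hline
  linarith [hlin x hx]

lemma tendsto_atBot_of_eventually_deriv_le {f f' : ℝ → ℝ} {δ : ℝ} (hδ : 0 < δ)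
    (hf : ∀ᶠ x in atTop, HasDerivAt f (f' x) x) (hle : ∀ᶠ x in atTop, f' x ≤ -δ) :
    Tendsto f atTop atBot := by
  rw [← tendsto_neg_atTop_iff]
  exact tendsto_atTop_of_eventually_le_deriv hδ (hf.mono fun x hx => hx.neg)
    (hle.mono fun x hx => le_neg_of_le_neg hx)

lemma ContDiffOn.hasDerivAt_deriv_of_isOpen {f : ℝ → ℝ} {s : Set ℝ} (hf : ContDiffOn ℝ 2 f s)
    (hs : IsOpen s) {x : ℝ} (hx : x ∈ s) : HasDerivAt (deriv f) (deriv (deriv f) x) x :=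
  (((hf.deriv_of_isOpen (m := 1) hs (by norm_num)).differentiableOn (by norm_num)).differentiableAt
    (hs.mem_nhds hx)).hasDerivAt

lemma tendsto_atTop_of_contDiffOn_of_deriv_pos {f : ℝ → ℝ} (hf2 : ContDiffOn ℝ 2 f (Ioi 0))
    (hf' : ∀ u > (0:ℝ), 0 < deriv f u) (hf'' : ∀ u > (0:ℝ), 0 ≤ deriv (deriv f) u) :
    Tendsto f atTop atTop := by
  have hd2 : ∀ u > (0:ℝ), HasDerivAt (deriv f) (deriv (deriv f) u) u := fun u hu =>
    hf2.hasDerivAt_deriv_of_isOpen isOpen_Ioi hu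
  have hf'_mono : MonotoneOn (deriv f) (Ioi 0) :=
    monotoneOn_of_deriv_nonneg (convex_Ioi 0)
      (fun u hu => (hd2 u hu).continuousAt.continuousWithinAt)
      (fun u hu => (hd2 u (interior_subset hu)).differentiableAt.differentiableWithinAt)
      (fun u hu => (hd2 u (interior_subset hu)).deriv ▸ hf'' u (interior_subset hu))
  exact tendsto_atTop_of_eventually_le_deriv (hf' 1 one_pos)
    ((eventually_gt_atTop 0).mono fun u hu =>
      ((hf2.differentiableOn (by norm_num)).differentiableAt (isOpen_Ioi.mem_nhds hu)).hasDerivAt)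
    ((eventually_ge_atTop 1).mono fun u hu =>
      hf'_mono (mem_Ioi.2 one_pos) (mem_Ioi.2 (one_pos.trans_le hu)) hu)

lemma hasDerivAt_div_deriv {f : ℝ → ℝ} {x : ℝ} (hf : DifferentiableAt ℝ f x)
    (hf' : DifferentiableAt ℝ (deriv f) x) (hx : deriv f x ≠ 0) :
    HasDerivAt (fun u => f u / deriv f u)
      (1 - (deriv f x ^ 2 / (f x * deriv (deriv f) x))⁻¹) x := by
  refine (hf.hasDerivAt.div hf'.hasDerivAt hx).congr_deriv ?_
  rw [inv_div]
  field_simp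

theorem stmt1_general (f : ℝ → ℝ) (q : ℝ)
    (hf2 : ContDiffOn ℝ 2 f (Set.Ioi 0))
    (hf' : ∀ u > (0:ℝ), 0 < deriv f u) (hf'' : ∀ u > (0:ℝ), 0 < deriv (deriv f) u)
    (hq : Tendsto (fun u => (deriv f u) ^ 2 / (f u * deriv (deriv f) u)) atTop (𝓝 q)) :
    1 ≤ q := by
  have hd : ∀ u > (0:ℝ), DifferentiableAt ℝ f u := fun u hu =>
    (hf2.differentiableOn (by norm_num)).differentiableAt (isOpen_Ioi.mem_nhds hu)
  have hd2 : ∀ u > (0:ℝ), HasDerivAt (deriv f) (deriv (deriv f) u) u := fun u hu =>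
    hf2.hasDerivAt_deriv_of_isOpen isOpen_Ioi hu
  have hf_top : Tendsto f atTop atTop :=
    tendsto_atTop_of_contDiffOn_of_deriv_pos hf2 hf' fun u hu => (hf'' u hu).le
  have hpos : ∀ᶠ u in atTop, 0 < u ∧ 0 < f u :=
    (eventually_gt_atTop 0).and (hf_top.eventually_gt_atTop 0)
  have hg_pos : ∀ᶠ u in atTop, 0 < deriv f u ^ 2 / (f u * deriv (deriv f) u) :=
    hpos.mono fun u ⟨hu, hfu⟩ => div_pos (pow_pos (hf' u hu) 2) (mul_pos hfu (hf'' u hu))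
  have hq0 : 0 ≤ q := ge_of_tendsto hq (hg_pos.mono fun _ h => h.le)
  by_contra! hq1
  have hc : 0 < (1 + q) / 2 := by linarith
  have hδ : 0 < ((1 + q) / 2)⁻¹ - 1 := by rw [sub_pos, one_lt_inv₀ hc]; linarith
  have hg_lt : ∀ᶠ u in atTop, deriv f u ^ 2 / (f u * deriv (deriv f) u) < (1 + q) / 2 :=
    hq.eventually_lt_const (by linarith)
  have h_bot : Tendsto (fun u => f u / deriv f u) atTop atBot := by
    refine tendsto_atBot_of_eventually_deriv_le hδ ((eventually_gt_atTop 0).mono fun u hu =>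
        hasDerivAt_div_deriv (hd u hu) (hd2 u hu).differentiableAt (hf' u hu).ne')
      ((hg_pos.and hg_lt).mono fun u ⟨hg0, hgc⟩ => ?_)
    linarith [(inv_lt_inv₀ hc hg0).2 hgc]
  obtain ⟨u, hneg, hu, hfu⟩ := ((h_bot.eventually_lt_atBot 0).and hpos).exists
  exact hneg.not_gt (div_pos hfu (hf' u hu))

theorem stmt1 (f : ℝ → ℝ) (q : ℝ)
    (hf1 : ContDiffOn ℝ 1 f (Set.Ici 0)) (hf2 : ContDiffOn ℝ 2 f (Set.Ioi 0))
    (hf0 : f 0 = 0) (hf'0 : deriv f 0 = 0)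
    (hf' : ∀ u > (0:ℝ), 0 < deriv f u) (hf'' : ∀ u > (0:ℝ), 0 < deriv (deriv f) u)
    (hq : Tendsto (fun u => (deriv f u) ^ 2 / (f u * deriv (deriv f) u)) atTop (𝓝 q)) :
    1 ≤ q :=
  stmt1_general f q hf2 hf' hf'' hq
end

section
/- Under the hypotheses of the previous statement, if additionally $u(r)>0$ for all $r>0$ and $u'(r)\to -\infty$-like behavior near $0$ (i.e.\ $u'<0$ near $0$), then $u'(r)<0$ for all $r>0$; i.e.\ $u'$ never vanishes. -/
open Real Filter Set Topology MeasureTheory intervalIntegral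

/-
Along a radial solution the Pohozaev functional has derivative
`P'(r) = r^(N-1) (N F(u) - (N-2)/2 u f(u)) = -(N-2)/2 r^(N-1) Q(u) ≤ 0`,
so `P` decreases from its limit `0` at the origin and stays `≤ 0`. At a critical point `r₀` of `u`
only the potential term survives, `P(r₀) = r₀^N F(u(r₀)) > 0`. Hence `u'` has no zero on
`(0, ∞)`, and being negative near `0` it is negative everywhere.
-/

noncomputable def pohozaev (N : ℕ) (f u : ℝ → ℝ) (r : ℝ) : ℝ :=
  (1 / 2) * r ^ N * (deriv u r) ^ 2 + r ^ N * (∫ s in (0:ℝ)..(u r), f s)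
    + ((N : ℝ) - 2) / 2 * r ^ (N - 1) * u r * deriv u r

theorem IsPreconnected.forall_neg_of_ne_zero {X : Type*} [TopologicalSpace X] {s : Set X}
    (hs : IsPreconnected s) {g : X → ℝ} (hg : ContinuousOn g s) (hne : ∀ x ∈ s, g x ≠ 0)
    {a : X} (ha : a ∈ s) (hga : g a < 0) : ∀ x ∈ s, g x < 0 := by
  intro x hx
  by_contra! hgx
  obtain ⟨y, hy, hy0⟩ := hs.intermediate_value ha hx hg ⟨hga.le, hgx⟩
  exact hne y hy hy0

theorem AntitoneOn.le_of_tendsto_nhdsGT {g : ℝ → ℝ} {a L : ℝ} (hg : AntitoneOn g (Ioi a))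
    (hlim : Tendsto g (𝓝[>] a) (𝓝 L)) {r : ℝ} (hr : a < r) : g r ≤ L :=
  ge_of_tendsto hlim <| by
    filter_upwards [Ioo_mem_nhdsGT hr] with s hs
    exact hg hs.1 hr hs.2.le

theorem intervalIntegrable_of_continuousOn_Ici {f : ℝ → ℝ} (hf : ContinuousOn f (Ici 0))
    {v : ℝ} (hv : 0 ≤ v) : IntervalIntegrable f volume 0 v :=
  (hf.mono (by simp [uIcc_of_le hv, Icc_subset_Ici_self])).intervalIntegrable

theorem hasDerivAt_integral_of_continuousOn_Ici {f : ℝ → ℝ} (hf : ContinuousOn f (Ici 0))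
    {v : ℝ} (hv : 0 < v) : HasDerivAt (fun v => ∫ s in (0:ℝ)..v, f s) (f v) v :=
  integral_hasDerivAt_right (intervalIntegrable_of_continuousOn_Ici hf hv.le)
    ((hf.mono fun x (hx : x ∈ Ioi 0) => mem_Ici.2 hx.le).stronglyMeasurableAtFilter isOpen_Ioi v hv)
    (hf.continuousAt (Ici_mem_nhds hv))

theorem natCast_mul_pow_sub_one (k : ℕ) {r : ℝ} (hr : r ≠ 0) :
    (k : ℝ) * r ^ (k - 1) = k * r ^ k / r := by
  rcases k with _ | k
  · simp
  · rw [pow_succ, mul_div_assoc, mul_div_cancel_right₀ _ hr, Nat.add_sub_cancel]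

theorem hasDerivAt_pohozaev {N : ℕ} (hN : 1 ≤ N) {f u : ℝ → ℝ} {r : ℝ} (hr : r ≠ 0)
    (hu : DifferentiableAt ℝ u r) (hu' : DifferentiableAt ℝ (deriv u) r)
    (hF : HasDerivAt (fun v => ∫ s in (0:ℝ)..v, f s) (f (u r)) (u r))
    (hode : deriv (deriv u) r + ((N : ℝ) - 1) / r * deriv u r + f (u r) = 0) :
    HasDerivAt (pohozaev N f u)
      (r ^ (N - 1) * (N * (∫ s in (0:ℝ)..(u r), f s) - ((N : ℝ) - 2) / 2 * (u r * f (u r)))) r := by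
  -- `k r^k / r` rather than `k r^(k-1)`, so that no exponent `N - 1 - 1` appears
  have hpow : ∀ k : ℕ, HasDerivAt (fun x : ℝ => x ^ k) (k * r ^ k / r) r := fun k => by
    simpa [natCast_mul_pow_sub_one k hr] using hasDerivAt_pow k r
  have hkin := ((hpow N).const_mul (1 / 2 : ℝ)).mul (hu'.hasDerivAt.pow 2)
  have hpot := (hpow N).mul (hF.comp r hu.hasDerivAt)
  have hmix :=
    (((hpow (N - 1)).const_mul (((N : ℝ) - 2) / 2)).mul hu.hasDerivAt).mul hu'.hasDerivAt
  have hu'' : deriv (deriv u) r = -(((N : ℝ) - 1) / r * deriv u r + f (u r)) := by linarith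
  have hN1 : ((N - 1 : ℕ) : ℝ) = N - 1 := by push_cast [hN]; ring
  have hrN : r ^ N = r ^ (N - 1) * r := by rw [← pow_succ, Nat.sub_add_cancel hN]
  refine HasDerivAt.congr_deriv (f := pohozaev N f u) ((hkin.add hpot).add hmix) ?_
  simp only [Pi.mul_apply, Pi.pow_apply, Function.comp_apply]
  rw [hu'', hN1, hrN]
  field_simp
  ring

theorem pohozaev_antitoneOn {N : ℕ} (hN : 2 < N) {f u : ℝ → ℝ} (hfc : ContinuousOn f (Ici 0))
    (hQ : ∀ v ≥ (0:ℝ), (2 * (N : ℝ) / ((N : ℝ) - 2)) * (∫ s in (0:ℝ)..v, f s) ≤ v * f v)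
    (hu2 : ContDiffOn ℝ 2 u (Ioi 0))
    (hode : ∀ r > (0:ℝ), deriv (deriv u) r + ((N : ℝ) - 1) / r * deriv u r + f (u r) = 0)
    (hupos : ∀ r > (0:ℝ), 0 < u r) :
    AntitoneOn (pohozaev N f u) (Ioi 0) := by
  have hderiv (r : ℝ) (hr : 0 < r) :=
    hasDerivAt_pohozaev (f := f) (by omega) hr.ne'
      ((hu2.differentiableOn two_ne_zero).differentiableAt (Ioi_mem_nhds hr))
      (((hu2.deriv_of_isOpen isOpen_Ioi (m := 1) (by norm_num)).differentiableOn
        one_ne_zero).differentiableAt (Ioi_mem_nhds hr))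
      (hasDerivAt_integral_of_continuousOn_Ici hfc (hupos r hr)) (hode r hr)
  refine antitoneOn_of_hasDerivWithinAt_nonpos (convex_Ioi 0)
    (fun r hr => (hderiv r hr).continuousAt.continuousWithinAt)
    (fun r hr => (hderiv r (interior_subset hr)).hasDerivWithinAt) fun r hr => ?_
  rw [interior_Ioi] at hr
  have hN2 : (0:ℝ) < N - 2 := by
    have : (2:ℝ) < N := by exact_mod_cast hN
    linarith
  -- `Q(u) ≥ 0`, multiplied by `(N - 2) / 2`
  have hQr : N * (∫ s in (0:ℝ)..(u r), f s) ≤ ((N : ℝ) - 2) / 2 * (u r * f (u r)) := by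
    have h := hQ (u r) (hupos r hr).le
    rw [div_mul_eq_mul_div, div_le_iff₀ hN2] at h
    linarith
  exact mul_nonpos_of_nonneg_of_nonpos (pow_pos hr _).le (by linarith)

theorem pohozaev_of_deriv_eq_zero {N : ℕ} {f u : ℝ → ℝ} {r : ℝ} (h : deriv u r = 0) :
    pohozaev N f u r = r ^ N * ∫ s in (0:ℝ)..(u r), f s := by
  simp [pohozaev, h]

theorem stmt11_general (N : ℕ) (hN : 2 < N) (f : ℝ → ℝ)
    (hfc : ContinuousOn f (Set.Ici 0))
    (hfpos : ∀ v > (0:ℝ), 0 < f v)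
    (hQ : ∀ v ≥ (0:ℝ),
      (2 * (N : ℝ) / ((N : ℝ) - 2)) * (∫ s in (0:ℝ)..v, f s) ≤ v * f v)
    (u : ℝ → ℝ) (hu2 : ContDiffOn ℝ 2 u (Set.Ioi 0))
    (hode : ∀ r > (0:ℝ),
      deriv (deriv u) r + ((N : ℝ) - 1) / r * deriv u r + f (u r) = 0)
    (hupos : ∀ r > (0:ℝ), 0 < u r)
    (hneg : ∃ ε > (0:ℝ), ∀ r ∈ Set.Ioo 0 ε, deriv u r < 0)
    (hP : Tendsto (fun r : ℝ =>
        (1 / 2) * r ^ N * (deriv u r) ^ 2 + r ^ N * (∫ s in (0:ℝ)..(u r), f s)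
          + ((N : ℝ) - 2) / 2 * r ^ (N - 1) * u r * deriv u r)
      (𝓝[>] 0) (𝓝 0)) :
    ∀ r > (0:ℝ), deriv u r < 0 := by
  have hanti := pohozaev_antitoneOn hN hfc hQ hu2 hode hupos
  have hne : ∀ r ∈ Ioi (0:ℝ), deriv u r ≠ 0 := by
    intro r hr h0
    have hF : 0 < ∫ s in (0:ℝ)..(u r), f s :=
      intervalIntegral_pos_of_pos_on (intervalIntegrable_of_continuousOn_Ici hfc (hupos r hr).le)
        (fun v hv => hfpos v hv.1) (hupos r hr)
    have hPr := hanti.le_of_tendsto_nhdsGT hP hr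
    rw [pohozaev_of_deriv_eq_zero h0] at hPr
    exact hPr.not_gt (mul_pos (pow_pos hr N) hF)
  obtain ⟨ε, hε, hnegε⟩ := hneg
  exact isPreconnected_Ioi.forall_neg_of_ne_zero
    (hu2.continuousOn_deriv_of_isOpen isOpen_Ioi (by norm_num)) hne (half_pos hε)
    (hnegε _ ⟨half_pos hε, half_lt_self hε⟩)

theorem stmt11 (N : ℕ) (hN : 2 < N) (f : ℝ → ℝ)
    (hfc : ContinuousOn f (Set.Ici 0)) (hf0 : f 0 = 0)
    (hfpos : ∀ v > (0:ℝ), 0 < f v)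
    (hQ : ∀ v ≥ (0:ℝ),
      (2 * (N : ℝ) / ((N : ℝ) - 2)) * (∫ s in (0:ℝ)..v, f s) ≤ v * f v)
    (u : ℝ → ℝ) (hu2 : ContDiffOn ℝ 2 u (Set.Ioi 0))
    (hode : ∀ r > (0:ℝ),
      deriv (deriv u) r + ((N : ℝ) - 1) / r * deriv u r + f (u r) = 0)
    (hupos : ∀ r > (0:ℝ), 0 < u r)
    (hneg : ∃ ε > (0:ℝ), ∀ r ∈ Set.Ioo 0 ε, deriv u r < 0)
    (hP : Tendsto (fun r : ℝ =>
        (1 / 2) * r ^ N * (deriv u r) ^ 2 + r ^ N * (∫ s in (0:ℝ)..(u r), f s)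
          + ((N : ℝ) - 2) / 2 * r ^ (N - 1) * u r * deriv u r)
      (𝓝[>] 0) (𝓝 0)) :
    ∀ r > (0:ℝ), deriv u r < 0 :=
  stmt11_general N hN f hfc hfpos hQ u hu2 hode hupos hneg hP
end
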